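/- arXiv:2506.06590 — 6 statements merged into one kernel-verified Lean document; each statement's English description precedes it below -/
import Mathlib

section
/- Let a, k₁, k₃ > 0 and define Y : ℝ≥0 → ℝ as the solution to Y'(t) + (2a/(k₁t+1) + 1/√(2k₃t+1))·Y(t) = a/(k₁t+1) with Y(0) = 1. Then lim_{t→∞} Y(t) = 0. -/
/-!
Write the equation as `f' = g - r f` with `g = a/(k₁t+1)` and
`r = 2a/(k₁t+1) + 1/√(2k₃t+1)`. Then `g / r → 0`, and `r` has an explicit antiderivative
`R → ∞`; the slowly decaying term `1/√(2k₃t+1)` is what makes `∫ r` diverge. Fix `ε > 0`.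
Wherever `f ≥ ε`, we have `f' ≤ -(ε/2) r`, so `f + (ε/2) R` is antitone there, and `f` cannot
stay above `ε` forever. Once `f` is below `ε` it stays there, because `f' < 0` wherever
`f = ε`. Applying this to `f = Y` and to `-Y` gives `Y → 0`.
-/

open Filter Set Real Topology

theorem le_of_hasDerivAt_neg_at_level {f f' : ℝ → ℝ} {t₀ c : ℝ}
    (hf : ∀ t ≥ t₀, HasDerivAt f (f' t) t) (h₀ : f t₀ ≤ c)
    (hc : ∀ t ≥ t₀, f t = c → f' t < 0) {t : ℝ} (ht : t₀ ≤ t) : f t ≤ c :=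
  image_le_of_deriv_right_lt_deriv_boundary' (b := t)
    (fun x hx => (hf x hx.1).continuousAt.continuousWithinAt)
    (fun x hx => (hf x hx.1).hasDerivWithinAt) h₀ continuousOn_const
    (fun x _ => hasDerivWithinAt_const x _ c) (fun x hx => hc x hx.1) ⟨ht, le_rfl⟩

theorem exists_lt_of_deriv_le_neg_mul {f f' R r : ℝ → ℝ} {t₀ ε c : ℝ} (hc : 0 < c)
    (hf : ∀ t ≥ t₀, HasDerivAt f (f' t) t) (hR : ∀ t ≥ t₀, HasDerivAt R (r t) t)
    (hR_top : Tendsto R atTop atTop) (hf' : ∀ t ≥ t₀, ε ≤ f t → f' t ≤ -c * r t) :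
    ∃ t ≥ t₀, f t < ε := by
  by_contra! hge
  have hF : ∀ t ≥ t₀, HasDerivAt (fun t => f t + c * R t) (f' t + c * r t) t :=
    fun t ht => (hf t ht).add ((hR t ht).const_mul c)
  have hanti : AntitoneOn (fun t => f t + c * R t) (Ici t₀) := by
    refine antitoneOn_of_hasDerivWithinAt_nonpos (f' := fun t => f' t + c * r t)
      (convex_Ici t₀) (fun t ht => (hF t ht).continuousAt.continuousWithinAt)
      (fun t ht => ?_) (fun t ht => ?_)
    · rw [interior_Ici] at ht
      exact (hF t ht.le).hasDerivWithinAt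
    · rw [interior_Ici] at ht
      linarith [hf' t ht.le (hge t ht.le)]
  obtain ⟨t, hRt, ht⟩ := ((hR_top.const_mul_atTop hc).eventually_gt_atTop
    (f t₀ + c * R t₀ - ε) |>.and (eventually_ge_atTop t₀)).exists
  have := hanti self_mem_Ici ht ht
  linarith [hge t ht]

theorem eventually_le_of_hasDerivAt_eq_sub_mul {f g r R : ℝ → ℝ}
    (hf : ∀ᶠ t in atTop, HasDerivAt f (g t - r t * f t) t)
    (hR : ∀ᶠ t in atTop, HasDerivAt R (r t) t) (hr : ∀ᶠ t in atTop, 0 < r t)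
    (hR_top : Tendsto R atTop atTop) (hgr : Tendsto (fun t => g t / r t) atTop (𝓝 0))
    {ε : ℝ} (hε : 0 < ε) : ∀ᶠ t in atTop, f t ≤ ε := by
  have hg : ∀ᶠ t in atTop, g t / r t < ε / 2 :=
    hgr.eventually (eventually_lt_nhds (half_pos hε))
  obtain ⟨t₀, h⟩ := eventually_atTop.1 (hf.and hR |>.and hr |>.and hg)
  have hdecay : ∀ t ≥ t₀, ε ≤ f t → g t - r t * f t ≤ -(ε / 2) * r t := by
    intro t ht hft
    obtain ⟨-, hrt⟩ := (h t ht).1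
    have := (div_lt_iff₀ hrt).1 (h t ht).2
    nlinarith
  obtain ⟨t₁, ht₁, hlt⟩ := exists_lt_of_deriv_le_neg_mul (half_pos hε)
    (fun t ht => (h t ht).1.1.1) (fun t ht => (h t ht).1.1.2) hR_top hdecay
  refine eventually_atTop.2 ⟨t₁, fun t ht => le_of_hasDerivAt_neg_at_level
    (fun s hs => (h s (ht₁.trans hs)).1.1.1) hlt.le (fun s hs hfs => ?_) ht⟩
  have := hdecay s (ht₁.trans hs) hfs.ge
  have := (h s (ht₁.trans hs)).1.2
  nlinarith

theorem tendsto_zero_of_hasDerivAt_eq_sub_mul {f g r R : ℝ → ℝ}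
    (hf : ∀ᶠ t in atTop, HasDerivAt f (g t - r t * f t) t)
    (hR : ∀ᶠ t in atTop, HasDerivAt R (r t) t) (hr : ∀ᶠ t in atTop, 0 < r t)
    (hR_top : Tendsto R atTop atTop) (hgr : Tendsto (fun t => g t / r t) atTop (𝓝 0)) :
    Tendsto f atTop (𝓝 0) := by
  have hf_neg : ∀ᶠ t in atTop, HasDerivAt (fun t => -f t) (-g t - r t * -f t) t :=
    hf.mono fun t h => h.neg.congr_deriv (by ring)
  have hgr_neg : Tendsto (fun t => -g t / r t) atTop (𝓝 0) := by
    simpa only [neg_div, neg_zero] using hgr.neg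
  refine tendsto_order.2 ⟨fun ε hε => ?_, fun ε hε => ?_⟩
  · filter_upwards [eventually_le_of_hasDerivAt_eq_sub_mul hf_neg hR hr hR_top hgr_neg
      (half_pos (neg_pos.2 hε))] with t ht
    linarith
  · filter_upwards [eventually_le_of_hasDerivAt_eq_sub_mul hf hR hr hR_top hgr
      (half_pos hε)] with t ht
    linarith

theorem tendsto_affine_atTop {m : ℝ} (hm : 0 < m) (b : ℝ) :
    Tendsto (fun t => m * t + b) atTop atTop :=
  tendsto_atTop_add_const_right _ b (tendsto_id.const_mul_atTop hm)

theorem hasDerivAt_mul_log_add_sqrt_div {a k₁ k₃ t : ℝ} (hk₁ : k₁ ≠ 0) (hk₃ : k₃ ≠ 0)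
    (h₁ : 0 < k₁ * t + 1) (h₃ : 0 < 2 * k₃ * t + 1) :
    HasDerivAt
      (fun t => 2 * a / k₁ * log (k₁ * t + 1) + √(2 * k₃ * t + 1) / k₃)
      (2 * a / (k₁ * t + 1) + 1 / √(2 * k₃ * t + 1)) t := by
  have hlin (m : ℝ) : HasDerivAt (fun t => m * t + 1) m t := by
    simpa using ((hasDerivAt_id t).const_mul m).add_const 1
  refine (((hlin k₁).log h₁.ne').const_mul (2 * a / k₁)).add
    (((hlin (2 * k₃)).sqrt h₃.ne').div_const k₃) |>.congr_deriv ?_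
  have := (sqrt_pos.2 h₃).ne'
  field_simp

theorem tendsto_mul_log_add_sqrt_div_atTop {a k₁ k₃ : ℝ} (ha : 0 < a) (hk₁ : 0 < k₁)
    (hk₃ : 0 < k₃) :
    Tendsto (fun t => 2 * a / k₁ * log (k₁ * t + 1) + √(2 * k₃ * t + 1) / k₃)
      atTop atTop :=
  ((tendsto_log_atTop.comp (tendsto_affine_atTop hk₁ 1)).const_mul_atTop
    (by positivity)).atTop_add_atTop
    ((tendsto_sqrt_atTop.comp (tendsto_affine_atTop (by positivity) 1)).atTop_div_const hk₃)

theorem tendsto_div_div_add_inv_sqrt {a k₁ k₃ : ℝ} (hk₁ : 0 < k₁) (hk₃ : 0 < k₃) :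
    Tendsto (fun t => a / (k₁ * t + 1) / (2 * a / (k₁ * t + 1) + 1 / √(2 * k₃ * t + 1)))
      atTop (𝓝 0) := by
  have hc : 0 < k₁ / (k₁ + 2 * k₃) := by positivity
  have hX : Tendsto (fun t => (k₁ * t + 1) / √(2 * k₃ * t + 1)) atTop atTop := by
    refine tendsto_atTop_mono' atTop ?_ ((tendsto_sqrt_atTop.comp
      (tendsto_affine_atTop (by positivity : 0 < 2 * k₃) 1)).const_mul_atTop hc)
    filter_upwards [eventually_ge_atTop 0] with t ht
    have hs := sqrt_pos.2 (by positivity : 0 < 2 * k₃ * t + 1)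
    rw [Function.comp_apply, le_div_iff₀ hs, mul_assoc, mul_self_sqrt (by positivity),
      div_mul_eq_mul_div, div_le_iff₀ (by positivity)]
    nlinarith [mul_nonneg (mul_nonneg hk₁.le hk₁.le) ht]
  refine ((tendsto_const_nhds (x := a)).div_atTop
    (tendsto_atTop_add_const_left _ (2 * a) hX)).congr' ?_
  filter_upwards [eventually_ge_atTop 0] with t ht
  have : k₁ * t + 1 ≠ 0 := by positivity
  rw [div_div, mul_add, mul_div_cancel₀ _ this, mul_one_div]

theorem stmt_4_general (Y : ℝ → ℝ) (a k₁ k₃ : ℝ) (ha : 0 < a) (hk₁ : 0 < k₁) (hk₃ : 0 < k₃)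
    (hY : ∀ t : ℝ, 0 ≤ t →
      HasDerivAt Y (a / (k₁ * t + 1)
        - (2 * a / (k₁ * t + 1) + 1 / Real.sqrt (2 * k₃ * t + 1)) * Y t) t) :
    Filter.Tendsto Y Filter.atTop (nhds 0) := by
  have hpos : ∀ᶠ t in atTop, 0 < k₁ * t + 1 ∧ 0 < 2 * k₃ * t + 1 :=
    (eventually_ge_atTop 0).mono fun t ht => ⟨by positivity, by positivity⟩
  exact tendsto_zero_of_hasDerivAt_eq_sub_mul ((eventually_ge_atTop 0).mono hY)
    (hpos.mono fun t ht => hasDerivAt_mul_log_add_sqrt_div hk₁.ne' hk₃.ne' ht.1 ht.2)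
    (hpos.mono fun t ht =>
      add_pos (div_pos (by positivity) ht.1) (one_div_pos.2 (sqrt_pos.2 ht.2)))
    (tendsto_mul_log_add_sqrt_div_atTop ha hk₁ hk₃) (tendsto_div_div_add_inv_sqrt hk₁ hk₃)

theorem stmt_4 (Y : ℝ → ℝ) (a k₁ k₃ : ℝ) (ha : 0 < a) (hk₁ : 0 < k₁) (hk₃ : 0 < k₃)
    (hY : ∀ t : ℝ, 0 ≤ t →
      HasDerivAt Y (a / (k₁ * t + 1)
        - (2 * a / (k₁ * t + 1) + 1 / Real.sqrt (2 * k₃ * t + 1)) * Y t) t)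
    (hY0 : Y 0 = 1) :
    Filter.Tendsto Y Filter.atTop (nhds 0) :=
  stmt_4_general Y a k₁ k₃ ha hk₁ hk₃ hY
end

section
/- Fix ε with 0 < ε < 1. Consider the linear ODE system V_yy' = ε·V_m - V_yy, V_m' = V_yy + ε·V_nn - (ε+1)·V_m, V_nn' = V_m - ε·V_nn, with nonnegative initial conditions summing to 1. Then the solutions converge: V_yy(t) → ε²/(ε²+ε+1), V_m(t) → ε/(ε²+ε+1), and V_nn(t) → 1/(ε²+ε+1) as t → ∞. -/
/-!
The total mass `Vyy + Vm + Vnn` is conserved, and for `σ = ±√ε` the combination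
`Vyy + (σ - ε) Vm - σ ε Vnn` is an eigenmode: it satisfies `f' = (σ - ε - 1) f`, and
`σ - ε - 1 = σ - σ² - 1 < 0`, so both modes decay exponentially. Inverting the change of
variables from `(Vyy, Vm, Vnn)` to (mass, mode₊, mode₋) writes each concentration as its
equilibrium value plus a combination of the two modes.
-/

open Filter Topology Real

lemma eq_of_forall_hasDerivAt_zero {f : ℝ → ℝ} (hf : ∀ t, HasDerivAt f 0 t) (x y : ℝ) :
    f x = f y :=
  is_const_of_deriv_eq_zero (fun t => (hf t).differentiableAt) (fun t => (hf t).deriv) x y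

lemma eq_mul_exp_of_hasDerivAt_mul {f : ℝ → ℝ} {c : ℝ} (hf : ∀ t, HasDerivAt f (c * f t) t)
    (t : ℝ) : f t = f 0 * exp (c * t) := by
  have hconst : ∀ x, HasDerivAt (fun x => f x * exp (-(c * x))) 0 x := fun x =>
    ((hf x).mul (((hasDerivAt_id x).const_mul c).neg.exp)).congr_deriv (by simp; ring)
  have h := eq_of_forall_hasDerivAt_zero hconst t 0
  simp only [mul_zero, neg_zero, exp_zero, mul_one] at h
  rw [← h, mul_assoc, ← exp_add, neg_add_cancel, exp_zero, mul_one]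

lemma tendsto_zero_of_hasDerivAt_mul_of_neg {f : ℝ → ℝ} {c : ℝ} (hc : c < 0)
    (hf : ∀ t, HasDerivAt f (c * f t) t) : Tendsto f atTop (𝓝 0) := by
  have hexp : Tendsto (fun t => exp (c * t)) atTop (𝓝 0) :=
    tendsto_exp_atBot.comp (tendsto_id.const_mul_atTop_of_neg hc)
  rw [funext (eq_mul_exp_of_hasDerivAt_mul hf)]
  simpa using hexp.const_mul (f 0)

lemma tendsto_div_of_mul_eq_add_mul_add_mul {α : Type*} {l : Filter α} {f g V : α → ℝ}
    (hf : Tendsto f l (𝓝 0)) (hg : Tendsto g l (𝓝 0)) {D a b c : ℝ} (hD : D ≠ 0)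
    (hV : ∀ t, D * V t = a + b * f t + c * g t) : Tendsto V l (𝓝 (a / D)) := by
  have hV' : V = fun t => (a + b * f t + c * g t) / D :=
    funext fun t => eq_div_of_mul_eq hD ((mul_comm _ _).trans (hV t))
  rw [hV']
  simpa using ((tendsto_const_nhds.add (hf.const_mul b)).add (hg.const_mul c)).div_const D

section ReactionChain

variable {ε : ℝ} {Vyy Vm Vnn : ℝ → ℝ}

lemma sum_eq_sum_zero_of_hasDerivAt
    (hyy : ∀ t, HasDerivAt Vyy (ε * Vm t - Vyy t) t)
    (hm : ∀ t, HasDerivAt Vm (Vyy t + ε * Vnn t - (ε + 1) * Vm t) t)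
    (hnn : ∀ t, HasDerivAt Vnn (Vm t - ε * Vnn t) t) (t : ℝ) :
    Vyy t + Vm t + Vnn t = Vyy 0 + Vm 0 + Vnn 0 :=
  eq_of_forall_hasDerivAt_zero (fun x => (((hyy x).add (hm x)).add (hnn x)).congr_deriv (by ring))
    t 0

lemma tendsto_eigenmode_of_hasDerivAt
    (hyy : ∀ t, HasDerivAt Vyy (ε * Vm t - Vyy t) t)
    (hm : ∀ t, HasDerivAt Vm (Vyy t + ε * Vnn t - (ε + 1) * Vm t) t)
    (hnn : ∀ t, HasDerivAt Vnn (Vm t - ε * Vnn t) t) {σ : ℝ} (hσ : σ ^ 2 = ε) :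
    Tendsto (fun t => Vyy t + (σ - ε) * Vm t - σ * ε * Vnn t) atTop (𝓝 0) := by
  refine tendsto_zero_of_hasDerivAt_mul_of_neg (c := σ - ε - 1)
    (by nlinarith [sq_nonneg (σ - 1 / 2)]) fun t => ?_
  refine (((hyy t).add ((hm t).const_mul (σ - ε))).sub ((hnn t).const_mul (σ * ε))).congr_deriv ?_
  subst hσ
  ring

end ReactionChain

theorem stmt_6_general (ε : ℝ) (hε : 0 < ε)
    (Vyy Vm Vnn : ℝ → ℝ)
    (hyy : ∀ t : ℝ, HasDerivAt Vyy (ε * Vm t - Vyy t) t)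
    (hm : ∀ t : ℝ, HasDerivAt Vm (Vyy t + ε * Vnn t - (ε + 1) * Vm t) t)
    (hnn : ∀ t : ℝ, HasDerivAt Vnn (Vm t - ε * Vnn t) t)
    (hsum : Vyy 0 + Vm 0 + Vnn 0 = 1) :
    Filter.Tendsto Vyy Filter.atTop (nhds (ε ^ 2 / (ε ^ 2 + ε + 1))) ∧
    Filter.Tendsto Vm Filter.atTop (nhds (ε / (ε ^ 2 + ε + 1))) ∧
    Filter.Tendsto Vnn Filter.atTop (nhds (1 / (ε ^ 2 + ε + 1))) := by
  obtain ⟨s, hs, rfl⟩ : ∃ s : ℝ, 0 < s ∧ s ^ 2 = ε := ⟨√ε, sqrt_pos.2 hε, sq_sqrt hε.le⟩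
  have hS t := (sum_eq_sum_zero_of_hasDerivAt hyy hm hnn t).trans hsum
  have hf := tendsto_eigenmode_of_hasDerivAt hyy hm hnn (σ := s) rfl
  have hg := tendsto_eigenmode_of_hasDerivAt hyy hm hnn (σ := -s) (neg_sq s)
  refine ⟨?_, ?_, ?_⟩
  · convert tendsto_div_of_mul_eq_add_mul_add_mul hf hg (V := Vyy)
      (D := 2 * (s ^ 4 + s ^ 2 + 1)) (a := 2 * s ^ 4) (b := s ^ 2 + s + 1) (c := s ^ 2 - s + 1)
      (by positivity) (fun t => by linear_combination 2 * s ^ 4 * hS t) using 2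
    field_simp
  · convert tendsto_div_of_mul_eq_add_mul_add_mul hf hg (V := Vm)
      (D := 2 * s * (s ^ 4 + s ^ 2 + 1)) (a := 2 * s ^ 3) (b := 1 - s ^ 3) (c := -(s ^ 3 + 1))
      (by positivity) (fun t => by linear_combination 2 * s ^ 3 * hS t) using 2
    field_simp
  · convert tendsto_div_of_mul_eq_add_mul_add_mul hf hg (V := Vnn)
      (D := 2 * s * (s ^ 4 + s ^ 2 + 1)) (a := 2 * s) (b := -(s ^ 2 + s + 1)) (c := s ^ 2 - s + 1)
      (by positivity) (fun t => by linear_combination 2 * s * hS t) using 2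
    field_simp

theorem stmt_6 (ε : ℝ) (hε : 0 < ε) (hε1 : ε < 1)
    (Vyy Vm Vnn : ℝ → ℝ)
    (hyy : ∀ t : ℝ, HasDerivAt Vyy (ε * Vm t - Vyy t) t)
    (hm : ∀ t : ℝ, HasDerivAt Vm (Vyy t + ε * Vnn t - (ε + 1) * Vm t) t)
    (hnn : ∀ t : ℝ, HasDerivAt Vnn (Vm t - ε * Vnn t) t)
    (h0yy : 0 ≤ Vyy 0) (h0m : 0 ≤ Vm 0) (h0nn : 0 ≤ Vnn 0)
    (hsum : Vyy 0 + Vm 0 + Vnn 0 = 1) :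
    Filter.Tendsto Vyy Filter.atTop (nhds (ε ^ 2 / (ε ^ 2 + ε + 1))) ∧
    Filter.Tendsto Vm Filter.atTop (nhds (ε / (ε ^ 2 + ε + 1))) ∧
    Filter.Tendsto Vnn Filter.atTop (nhds (1 / (ε ^ 2 + ε + 1))) :=
  stmt_6_general ε hε Vyy Vm Vnn hyy hm hnn hsum
end

section
/- Let U ⊆ {1,…,k} be nonempty and let x, y ∈ D_U with φ(x) ≠ φ(y) for a predicate φ. Let ℓ be the line segment from x to y. Then the image σ_φ(ℓ) of ℓ under the sum characteristic function σ_φ contains 0 as an isolated point, and hence σ_φ restricted to D_U is not continuous. -/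
/-- The region of nonnegative vectors whose support is exactly `U`. -/
def DU (k : ℕ) (U : Set (Fin k)) : Set (Fin k → ℝ) :=
  {x | (∀ i, 0 ≤ x i) ∧ ∀ i, 0 < x i ↔ i ∈ U}

/-- The sum characteristic function of a predicate. -/
noncomputable def sumChar (k : ℕ) (φ : (Fin k → ℝ) → Bool) (x : Fin k → ℝ) : ℝ :=
  if φ x then ∑ i, x i else 0

theorem stmt_11 (k : ℕ) (φ : (Fin k → ℝ) → Bool) (U : Set (Fin k)) (hU : U.Nonempty)
    (x y : Fin k → ℝ) (hx : x ∈ DU k U) (hy : y ∈ DU k U) (hφ : φ x ≠ φ y) :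
    (0 ∈ sumChar k φ '' segment ℝ x y ∧
      ∃ ε > 0, ∀ v ∈ sumChar k φ '' segment ℝ x y, v ≠ 0 → ε < v) ∧
    ¬ ContinuousOn (sumChar k φ) (DU k U) := by
  obtain ⟨i₀, hi₀⟩ := hU
  have hxi : 0 < x i₀ := (hx.2 i₀).mpr hi₀
  have hyi : 0 < y i₀ := (hy.2 i₀).mpr hi₀
  set c : ℝ := min (x i₀) (y i₀) with hc_def
  have hc : 0 < c := lt_min hxi hyi
  -- every point of the segment lies in DU and has i₀-coordinate ≥ c
  have hseg : ∀ z ∈ segment ℝ x y, z ∈ DU k U ∧ c ≤ z i₀ := by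
    rintro z ⟨a, b, ha, hb, hab, rfl⟩
    have hzi : ∀ i, (a • x + b • y) i = a * x i + b * y i := by
      intro i; simp [Pi.add_apply]
    refine ⟨⟨?_, ?_⟩, ?_⟩
    · intro i
      rw [hzi]
      have := hx.1 i; have := hy.1 i
      positivity
    · intro i
      rw [hzi]
      constructor
      · intro h
        by_contra hiU
        have hx0 : x i = 0 := le_antisymm (not_lt.mp (fun h' => hiU ((hx.2 i).mp h'))) (hx.1 i)
        have hy0 : y i = 0 := le_antisymm (not_lt.mp (fun h' => hiU ((hy.2 i).mp h'))) (hy.1 i)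
        rw [hx0, hy0] at h; simp at h
      · intro hiU
        have hxp : 0 < x i := (hx.2 i).mpr hiU
        have hyp : 0 < y i := (hy.2 i).mpr hiU
        rcases lt_or_eq_of_le ha with ha' | ha'
        · exact add_pos_of_pos_of_nonneg (mul_pos ha' hxp) (mul_nonneg hb hyp.le)
        · have hb' : b = 1 := by linarith
          rw [← ha', hb']; simpa using hyp
    · rw [hzi]
      have h1 : a * c ≤ a * x i₀ := mul_le_mul_of_nonneg_left (min_le_left _ _) ha
      have h2 : b * c ≤ b * y i₀ := mul_le_mul_of_nonneg_left (min_le_right _ _) hb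
      nlinarith
  -- sum lower bound on segment where φ is true
  have hsum : ∀ z ∈ segment ℝ x y, c ≤ ∑ i, z i := by
    intro z hz
    obtain ⟨⟨hz0, _⟩, hzc⟩ := hseg z hz
    calc c ≤ z i₀ := hzc
      _ ≤ ∑ i, z i := Finset.single_le_sum (fun i _ => hz0 i) (Finset.mem_univ i₀)
  -- one endpoint has φ = false, the other φ = true
  have hzero : ∃ w ∈ segment ℝ x y, φ w = false := by
    cases hpx : φ x
    · exact ⟨x, left_mem_segment ℝ x y, hpx⟩
    · refine ⟨y, right_mem_segment ℝ x y, ?_⟩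
      cases hpy : φ y
      · rfl
      · exact absurd (hpx.trans hpy.symm) hφ
  have hone : ∃ w ∈ segment ℝ x y, φ w = true := by
    cases hpx : φ x
    · refine ⟨y, right_mem_segment ℝ x y, ?_⟩
      cases hpy : φ y
      · exact absurd (hpx.trans hpy.symm) hφ
      · rfl
    · exact ⟨x, left_mem_segment ℝ x y, hpx⟩
  obtain ⟨w₀, hw₀s, hw₀⟩ := hzero
  obtain ⟨w₁, hw₁s, hw₁⟩ := hone
  have h0mem : (0 : ℝ) ∈ sumChar k φ '' segment ℝ x y :=
    ⟨w₀, hw₀s, by simp [sumChar, hw₀]⟩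
  have hgap : ∀ v ∈ sumChar k φ '' segment ℝ x y, v ≠ 0 → c / 2 < v := by
    rintro v ⟨z, hzs, rfl⟩ hv
    by_cases hpz : φ z
    · have : sumChar k φ z = ∑ i, z i := by simp [sumChar, hpz]
      rw [this]
      linarith [hsum z hzs]
    · exact absurd (by simp [sumChar, hpz]) hv
  refine ⟨⟨h0mem, c / 2, by linarith, hgap⟩, ?_⟩
  intro hcont
  have hsub : segment ℝ x y ⊆ DU k U := fun z hz => (hseg z hz).1
  have hcont' : ContinuousOn (sumChar k φ) (segment ℝ x y) := hcont.mono hsub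
  have hconn : IsPreconnected (sumChar k φ '' segment ℝ x y) :=
    ((convex_segment x y).isPreconnected).image _ hcont'
  have hs1 : sumChar k φ w₁ ∈ sumChar k φ '' segment ℝ x y := ⟨w₁, hw₁s, rfl⟩
  have hs1v : sumChar k φ w₁ = ∑ i, w₁ i := by simp [sumChar, hw₁]
  have hcs : c ≤ sumChar k φ w₁ := hs1v ▸ hsum w₁ hw₁s
  have hicc : Set.Icc (0 : ℝ) (sumChar k φ w₁) ⊆ sumChar k φ '' segment ℝ x y :=
    hconn.Icc_subset h0mem hs1
  have hmem : c / 2 ∈ sumChar k φ '' segment ℝ x y :=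
    hicc ⟨by linarith, by linarith⟩
  have := hgap _ hmem (by positivity)
  linarith
end

section
/- Consider the ODE N'(t) = -k₁·A(t)·N(t) + (k₂·B(t) + k₃·C(t))·(1 - N(t)), where A, B, C : ℝ≥0 → ℝ≥0 are continuous with A(t) ≥ δ > 0 for all t, lim_{t→∞} B(t) = lim_{t→∞} C(t) = 0, and N(0) ∈ [0,1]. Then lim_{t→∞} N(t) = 0. -/
open Filter Real Topology

/-! The equation is linear, `N' = -g N + f` with `g = k₁A + k₂B + k₃C` and `f = k₂B + k₃C`;
eventually `g ≥ k₁δ/2 > 0` and `|f| ≤ ε g`. With the integrating factor `E = exp (∫ g)` one has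
`(N E)' = f E` and `E' = g E`, so `|(N E) t - (N E) T| ≤ ε (E t - E T)`, i.e.
`|N t| ≤ |N T| E T / E t + ε`, and `E t → ∞` because `g` is bounded below by a positive constant. -/

theorem norm_sub_le_sub_of_norm_deriv_le {F : Type*} [NormedAddCommGroup F] [NormedSpace ℝ F]
    {M M' : ℝ → F} {φ φ' : ℝ → ℝ} {a : ℝ} (hM : ∀ x ≥ a, HasDerivAt M (M' x) x)
    (hφ : ∀ x ≥ a, HasDerivAt φ (φ' x) x) (bound : ∀ x ≥ a, ‖M' x‖ ≤ φ' x) {x : ℝ}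
    (hx : a ≤ x) : ‖M x - M a‖ ≤ φ x - φ a := by
  refine image_norm_le_of_norm_deriv_right_le_deriv_boundary' (f := fun y => M y - M a)
    (B := fun y => φ y - φ a) ?_ (fun y hy => ((hM y hy.1).sub_const _).hasDerivWithinAt) (by simp)
    ?_ (fun y hy => ((hφ y hy.1).sub_const _).hasDerivWithinAt) (fun y hy => bound y hy.1)
    ⟨hx, le_rfl⟩
  · exact fun y hy => ((hM y hy.1).continuousAt.sub continuousAt_const).continuousWithinAt
  · exact fun y hy => ((hφ y hy.1).continuousAt.sub continuousAt_const).continuousWithinAt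

theorem add_mul_sub_le_of_le_deriv {G g : ℝ → ℝ} {a c : ℝ} (hG : ∀ x ≥ a, HasDerivAt G (g x) x)
    (hg : ∀ x ≥ a, c ≤ g x) {x : ℝ} (hx : a ≤ x) : G a + c * (x - a) ≤ G x :=
  image_le_of_deriv_right_le_deriv_boundary (f := fun y => G a + c * (y - a))
    (continuous_const.add (continuous_const.mul (continuous_id.sub continuous_const))).continuousOn
    (fun y _ => (((hasDerivAt_id y).sub_const a).const_mul c).const_add _ |>.hasDerivWithinAt)
    (by simp) (fun y hy => (hG y hy.1).continuousAt.continuousWithinAt)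
    (fun y hy => (hG y hy.1).hasDerivWithinAt) (fun y hy => by simpa using hg y hy.1) ⟨hx, le_rfl⟩

theorem abs_le_of_hasDerivAt_neg_mul_add {N g f G : ℝ → ℝ} {T ε : ℝ} (hε : 0 ≤ ε)
    (hG : ∀ t, HasDerivAt G (g t) t) (hN : ∀ t ≥ T, HasDerivAt N (-g t * N t + f t) t)
    (hf : ∀ t ≥ T, |f t| ≤ ε * g t) {t : ℝ} (ht : T ≤ t) :
    |N t| ≤ |N T| * exp (G T - G t) + ε := by
  have hM : ∀ s ≥ T, HasDerivAt (fun s => N s * exp (G s)) (f s * exp (G s)) s := fun s hs =>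
    ((hN s hs).mul (hG s).exp).congr_deriv (by ring)
  have hφ : ∀ s ≥ T, HasDerivAt (fun s => ε * exp (G s)) (ε * (exp (G s) * g s)) s :=
    fun s _ => (hG s).exp.const_mul ε
  have hfence := norm_sub_le_sub_of_norm_deriv_le hM hφ (fun s hs => by
    rw [Real.norm_eq_abs, abs_mul, abs_of_pos (exp_pos _)]
    nlinarith [hf s hs, exp_pos (G s)]) ht
  simp only [Real.norm_eq_abs] at hfence
  have hsplit : exp (G T - G t) * exp (G t) = exp (G T) := by rw [← exp_add]; ring_nf
  have hEt := exp_pos (G t)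
  rw [← mul_le_mul_iff_left₀ hEt, add_mul, mul_assoc, hsplit]
  have := abs_sub_abs_le_abs_sub (N t * exp (G t)) (N T * exp (G T))
  rw [abs_mul, abs_mul, abs_of_pos hEt, abs_of_pos (exp_pos _)] at this
  linarith [mul_nonneg hε (exp_pos (G T)).le]

theorem tendsto_zero_of_hasDerivAt_neg_mul_add {N g f : ℝ → ℝ} {c : ℝ} (hc : 0 < c)
    (hg : Continuous g) (hgc : ∀ᶠ t in atTop, c ≤ g t) (hf : Tendsto f atTop (𝓝 0))
    (hN : ∀ᶠ t in atTop, HasDerivAt N (-g t * N t + f t) t) : Tendsto N atTop (𝓝 0) := by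
  set G := fun t => ∫ s in (0 : ℝ)..t, g s
  have hG : ∀ t, HasDerivAt G (g t) t := fun t => (hg.integral_hasStrictDerivAt 0 t).hasDerivAt
  rw [Metric.tendsto_nhds]
  intro ε hε
  have hfε : ∀ᶠ t in atTop, |f t| ≤ ε / 2 * c := by
    filter_upwards [Metric.tendsto_nhds.1 hf (ε / 2 * c) (by positivity)] with t ht
    exact (Real.dist_0_eq_abs (f t) ▸ ht).le
  obtain ⟨T, hT⟩ := eventually_atTop.1 (hgc.and (hN.and hfε))
  have hbound : ∀ t ≥ T, |N t| ≤ |N T| * exp (G T - G t) + ε / 2 :=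
    fun t ht => abs_le_of_hasDerivAt_neg_mul_add (by positivity) hG (fun s hs => (hT s hs).2.1)
      (fun s hs => (hT s hs).2.2.trans (mul_le_mul_of_nonneg_left (hT s hs).1 (by positivity))) ht
  have hdecay : Tendsto (fun t => |N T| * exp (G T - G t)) atTop (𝓝 0) := by
    have hlin : Tendsto (fun t => -c * (t - T)) atTop atBot :=
      (tendsto_id.atTop_add tendsto_const_nhds).const_mul_atTop_of_neg (by linarith)
    have hGT : Tendsto (fun t => G T - G t) atTop atBot :=
      tendsto_atBot_mono' _ (eventually_ge_atTop T |>.mono fun t ht => by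
        linarith [add_mul_sub_le_of_le_deriv (fun s _ => hG s) (fun s hs => (hT s hs).1) ht]) hlin
    simpa using (tendsto_exp_atBot.comp hGT).const_mul |N T|
  filter_upwards [hdecay.eventually (gt_mem_nhds (half_pos hε)), eventually_ge_atTop T]
    with t hsmall ht
  rw [Real.dist_0_eq_abs]
  linarith [hbound t ht]

theorem stmt_12_general (N A B C : ℝ → ℝ) (k₁ k₂ k₃ δ : ℝ)
    (hk₁ : 0 < k₁) (hδ : 0 < δ)
    (hAc : Continuous A) (hBc : Continuous B) (hCc : Continuous C)
    (hAnn : ∀ t : ℝ, 0 ≤ t → δ ≤ A t)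
    (hB : Filter.Tendsto B Filter.atTop (nhds 0))
    (hC : Filter.Tendsto C Filter.atTop (nhds 0))
    (hN : ∀ t : ℝ, 0 ≤ t →
      HasDerivAt N (-k₁ * A t * N t + (k₂ * B t + k₃ * C t) * (1 - N t)) t) :
    Filter.Tendsto N Filter.atTop (nhds 0) := by
  have hf : Tendsto (fun t => k₂ * B t + k₃ * C t) atTop (𝓝 0) := by
    simpa using (hB.const_mul k₂).add (hC.const_mul k₃)
  refine tendsto_zero_of_hasDerivAt_neg_mul_add (g := fun t => k₁ * A t + (k₂ * B t + k₃ * C t))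
    (c := k₁ * δ / 2) (by positivity) (by fun_prop) ?_ hf ?_
  · have hc : -(k₁ * δ / 2) < 0 := by linarith [mul_pos hk₁ hδ]
    filter_upwards [eventually_ge_atTop 0, hf.eventually (Ioi_mem_nhds hc)] with t ht hft
    linarith [mul_le_mul_of_nonneg_left (hAnn t ht) hk₁.le, hft]
  · filter_upwards [eventually_ge_atTop 0] with t ht
    exact (hN t ht).congr_deriv (by ring)

theorem stmt_12 (N A B C : ℝ → ℝ) (k₁ k₂ k₃ δ : ℝ)
    (hk₁ : 0 < k₁) (hk₂ : 0 < k₂) (hk₃ : 0 < k₃) (hδ : 0 < δ)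
    (hAc : Continuous A) (hBc : Continuous B) (hCc : Continuous C)
    (hAnn : ∀ t : ℝ, 0 ≤ t → δ ≤ A t)
    (hBnn : ∀ t : ℝ, 0 ≤ t → 0 ≤ B t) (hCnn : ∀ t : ℝ, 0 ≤ t → 0 ≤ C t)
    (hB : Filter.Tendsto B Filter.atTop (nhds 0))
    (hC : Filter.Tendsto C Filter.atTop (nhds 0))
    (hN0 : N 0 ∈ Set.Icc (0:ℝ) 1)
    (hN : ∀ t : ℝ, 0 ≤ t →
      HasDerivAt N (-k₁ * A t * N t + (k₂ * B t + k₃ * C t) * (1 - N t)) t) :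
    Filter.Tendsto N Filter.atTop (nhds 0) :=
  stmt_12_general N A B C k₁ k₂ k₃ δ hk₁ hδ hAc hBc hCc hAnn hB hC hN
end

section
/- Suppose Ŷ(t) satisfies Ŷ'(t) = k₁·T(t)·P(t) - k₃·F(t)·Ŷ(t), where T, F, P : ℝ≥0 → ℝ≥0 are continuous, P is bounded, lim_{t→∞} T(t) = 0, and lim_{t→∞} F(t) = 1. Then lim_{t→∞} Ŷ(t) = 0. -/
/-!
Once `p ≥ c > 0` and `|g| ≤ ε` hold on `[t₀, ∞)`, a solution of `y' = g - p y` stays below the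
barrier `A e^{-c (t - t₀)} + 2ε/c` for any `A ≥ max (y t₀) 0`: where `y` touches the barrier, `y' ≤ ε - c·(barrier)` is
strictly smaller than the barrier's slope. Applied to `y` and `-y`, this shows that `|y|` is
at most `2ε/c` plus a decaying term, and `ε` can be taken arbitrarily small since
`g = k₁ T P → 0`, while `p = k₃ F → k₃ > 0`.
-/

open Filter Topology Real

theorem le_mul_exp_add_of_hasDerivAt_sub_mul {y g p : ℝ → ℝ} {t₀ c ε A : ℝ}
    (hc : 0 < c) (hε : 0 < ε) (hA : 0 ≤ A) (hy₀ : y t₀ ≤ A)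
    (hy : ∀ t ≥ t₀, HasDerivAt y (g t - p t * y t) t)
    (hp : ∀ t ≥ t₀, c ≤ p t) (hg : ∀ t ≥ t₀, g t ≤ ε) :
    ∀ t ≥ t₀, y t ≤ A * exp (-c * (t - t₀)) + 2 * ε / c := by
  set B : ℝ → ℝ := fun t => A * exp (-c * (t - t₀)) + 2 * ε / c
  have hB : ∀ t, HasDerivAt B (-c * (A * exp (-c * (t - t₀)))) t := fun t => by
    have := ((((hasDerivAt_id t).sub_const t₀).const_mul (-c)).exp.const_mul A).add_const
      (2 * ε / c)
    exact this.congr_deriv (by simp only [id]; ring)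
  have hB₀ : y t₀ ≤ B t₀ := by
    have : 0 ≤ 2 * ε / c := by positivity
    simp only [B, sub_self, mul_zero, exp_zero, mul_one]
    linarith
  intro t ht
  refine image_le_of_deriv_right_lt_deriv_boundary
    (fun x hx => (hy x hx.1).continuousAt.continuousWithinAt)
    (fun x hx => (hy x hx.1).hasDerivWithinAt) hB₀ hB (fun x hx hyB => ?_) ⟨ht, le_rfl⟩
  have hpB : c * B x ≤ p x * B x := mul_le_mul_of_nonneg_right (hp x hx.1) (by positivity)
  have hcB : c * B x = c * (A * exp (-c * (x - t₀))) + 2 * ε := by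
    simp only [B]; field_simp
  rw [hyB]
  linarith [hg x hx.1]

theorem abs_le_mul_exp_add_of_hasDerivAt_sub_mul {y g p : ℝ → ℝ} {t₀ c ε : ℝ}
    (hc : 0 < c) (hε : 0 < ε)
    (hy : ∀ t ≥ t₀, HasDerivAt y (g t - p t * y t) t)
    (hp : ∀ t ≥ t₀, c ≤ p t) (hg : ∀ t ≥ t₀, |g t| ≤ ε) :
    ∀ t ≥ t₀, |y t| ≤ |y t₀| * exp (-c * (t - t₀)) + 2 * ε / c := by
  intro t ht
  have hy_neg : ∀ t ≥ t₀, HasDerivAt (-y) (-g t - p t * (-y) t) t := fun t ht =>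
    (hy t ht).neg.congr_deriv (by simp only [Pi.neg_apply]; ring)
  rw [abs_le']
  exact ⟨le_mul_exp_add_of_hasDerivAt_sub_mul hc hε (abs_nonneg _) (le_abs_self _) hy hp
      (fun s hs => (abs_le.1 (hg s hs)).2) t ht,
    le_mul_exp_add_of_hasDerivAt_sub_mul (y := -y) hc hε (abs_nonneg _) (neg_le_abs _) hy_neg hp
      (fun s hs => neg_le.1 (abs_le.1 (hg s hs)).1) t ht⟩

theorem tendsto_zero_of_hasDerivAt_sub_mul {y g p : ℝ → ℝ} {c : ℝ} (hc : 0 < c)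
    (hy : ∀ᶠ t in atTop, HasDerivAt y (g t - p t * y t) t)
    (hp : ∀ᶠ t in atTop, c ≤ p t) (hg : Tendsto g atTop (𝓝 0)) :
    Tendsto y atTop (𝓝 0) := by
  rw [Metric.tendsto_nhds]
  intro ε hε
  have hη : 0 < ε * c / 4 := by positivity
  have hg' : ∀ᶠ t in atTop, |g t| ≤ ε * c / 4 := by
    simpa only [Real.dist_eq, sub_zero] using hg.eventually (Metric.closedBall_mem_nhds 0 hη)
  obtain ⟨t₀, ht₀⟩ := eventually_atTop.1 (hy.and (hp.and hg'))
  have hbound := abs_le_mul_exp_add_of_hasDerivAt_sub_mul hc hη (fun t ht => (ht₀ t ht).1)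
    (fun t ht => (ht₀ t ht).2.1) (fun t ht => (ht₀ t ht).2.2)
  have hdecay : Tendsto (fun t => |y t₀| * exp (-c * (t - t₀))) atTop (𝓝 0) := by
    have : Tendsto (fun t => -c * (t - t₀)) atTop atBot :=
      (tendsto_atTop_add_const_right _ (-t₀) tendsto_id).const_mul_atTop_of_neg (neg_lt_zero.2 hc)
    simpa using (tendsto_exp_atBot.comp this).const_mul |y t₀|
  filter_upwards [hdecay.eventually (gt_mem_nhds (half_pos hε)), eventually_ge_atTop t₀]
    with t hsmall ht
  have : 2 * (ε * c / 4) / c = ε / 2 := by field_simp; ring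
  rw [Real.dist_eq, sub_zero]
  linarith [hbound t ht]

theorem stmt_14_general (Yh T F P : ℝ → ℝ) (k₁ k₃ : ℝ) (hk₃ : 0 < k₃)
    (hPnn : ∀ t : ℝ, 0 ≤ t → 0 ≤ P t)
    (hPbd : ∃ M : ℝ, ∀ t : ℝ, 0 ≤ t → P t ≤ M)
    (hT : Filter.Tendsto T Filter.atTop (nhds 0))
    (hF : Filter.Tendsto F Filter.atTop (nhds 1))
    (hYh : ∀ t : ℝ, 0 ≤ t → HasDerivAt Yh (k₁ * T t * P t - k₃ * F t * Yh t) t) :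
    Filter.Tendsto Yh Filter.atTop (nhds 0) := by
  obtain ⟨M, hM⟩ := hPbd
  have hP : IsBoundedUnder (· ≤ ·) atTop (fun t => ‖P t‖) :=
    isBoundedUnder_of_eventually_le (a := M) <| (eventually_ge_atTop 0).mono fun t ht => by
      rw [Real.norm_of_nonneg (hPnn t ht)]; exact hM t ht
  have hg : Tendsto (fun t => k₁ * T t * P t) atTop (𝓝 0) := by
    simpa [mul_assoc] using (hT.zero_mul_isBoundedUnder_le hP).const_mul k₁
  have hp : ∀ᶠ t in atTop, k₃ / 2 ≤ k₃ * F t := by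
    have : Tendsto (fun t => k₃ * F t) atTop (𝓝 k₃) := by simpa using hF.const_mul k₃
    exact this.eventually (eventually_ge_nhds (half_lt_self hk₃))
  exact tendsto_zero_of_hasDerivAt_sub_mul (half_pos hk₃)
    ((eventually_ge_atTop 0).mono hYh) hp hg

theorem stmt_14 (Yh T F P : ℝ → ℝ) (k₁ k₃ : ℝ) (hk₁ : 0 < k₁) (hk₃ : 0 < k₃)
    (hTc : Continuous T) (hFc : Continuous F) (hPc : Continuous P)
    (hTnn : ∀ t : ℝ, 0 ≤ t → 0 ≤ T t)
    (hFnn : ∀ t : ℝ, 0 ≤ t → 0 ≤ F t)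
    (hPnn : ∀ t : ℝ, 0 ≤ t → 0 ≤ P t)
    (hPbd : ∃ M : ℝ, ∀ t : ℝ, 0 ≤ t → P t ≤ M)
    (hT : Filter.Tendsto T Filter.atTop (nhds 0))
    (hF : Filter.Tendsto F Filter.atTop (nhds 1))
    (hYh : ∀ t : ℝ, 0 ≤ t → HasDerivAt Yh (k₁ * T t * P t - k₃ * F t * Yh t) t) :
    Filter.Tendsto Yh Filter.atTop (nhds 0) :=
  stmt_14_general Yh T F P k₁ k₃ hk₃ hPnn hPbd hT hF hYh
end

section
/- Suppose N'(t) = k_n·V_n(t)·(1 - N(t)) - k_y·V_y(t)·N(t) where V_y, V_n : ℝ≥0 → ℝ≥0 are continuous, lim_{t→∞} V_n(t) = 0, liminf_{t→∞} V_y(t) > 0, k_y, k_n > 0, and N(0) ∈ [0,1]. Then lim_{t→∞} N(t) = 0. -/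
/-!
Multiplying by the integrating factor `exp (∫ (kn Vn + ky Vy))` shows that `N` and `1 - N` stay
nonnegative. Once `Vy > c > 0` and `kn Vn < ky c ε / 2`, this gives `N' ≤ -ky c (N - ε / 2)`, so
`(N - ε / 2) exp (ky c t)` is eventually antitone and `N` ends up below `ε`.
-/

open Filter Real Set

theorem monotoneOn_mul_exp_of_deriv_add_mul_nonneg {D : Set ℝ} (hD : Convex ℝ D)
    {f f' A a : ℝ → ℝ} (hf : ∀ t ∈ D, HasDerivAt f (f' t) t) (hA : ∀ t ∈ D, HasDerivAt A (a t) t)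
    (h : ∀ t ∈ D, 0 ≤ f' t + a t * f t) : MonotoneOn (fun t => f t * exp (A t)) D := by
  have hd : ∀ t ∈ D,
      HasDerivAt (fun t => f t * exp (A t)) ((f' t + a t * f t) * exp (A t)) t := fun t ht =>
    ((hf t ht).fun_mul (hA t ht).exp).congr_deriv (by ring)
  exact monotoneOn_of_hasDerivWithinAt_nonneg hD
    (fun t ht => (hd t ht).continuousAt.continuousWithinAt)
    (fun t ht => (hd t (interior_subset ht)).hasDerivWithinAt)
    (fun t ht => mul_nonneg (h t (interior_subset ht)) (exp_pos _).le)

theorem nonneg_of_deriv_add_mul_nonneg {f f' a : ℝ → ℝ} {t₀ : ℝ} (ha : Continuous a)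
    (hf : ∀ t ∈ Ici t₀, HasDerivAt f (f' t) t) (h : ∀ t ∈ Ici t₀, 0 ≤ f' t + a t * f t)
    (h₀ : 0 ≤ f t₀) : ∀ t ∈ Ici t₀, 0 ≤ f t := by
  have hA : ∀ t ∈ Ici t₀, HasDerivAt (fun t => ∫ s in t₀..t, a s) (a t) t := fun t _ =>
    intervalIntegral.integral_hasDerivAt_right (ha.intervalIntegrable _ _)
      (ha.stronglyMeasurableAtFilter _ _) ha.continuousAt
  intro t ht
  have hmono := monotoneOn_mul_exp_of_deriv_add_mul_nonneg (convex_Ici t₀) hf hA h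
    self_mem_Ici ht ht
  have : 0 ≤ f t * exp (∫ s in t₀..t, a s) := by
    refine le_trans ?_ hmono
    positivity
  exact nonneg_of_mul_nonneg_left this (exp_pos _)

theorem mem_Icc_of_hasDerivAt_mul_one_sub_sub_mul {f p q : ℝ → ℝ} {t₀ : ℝ}
    (hp : Continuous p) (hq : Continuous q)
    (hp₀ : ∀ t ∈ Ici t₀, 0 ≤ p t) (hq₀ : ∀ t ∈ Ici t₀, 0 ≤ q t)
    (hf : ∀ t ∈ Ici t₀, HasDerivAt f (p t * (1 - f t) - q t * f t) t) (h₀ : f t₀ ∈ Icc 0 1) :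
    ∀ t ∈ Ici t₀, f t ∈ Icc 0 1 := by
  have hpq : Continuous fun t => p t + q t := hp.add hq
  have hlow := nonneg_of_deriv_add_mul_nonneg hpq hf
    (fun t ht => by linarith [hp₀ t ht]) h₀.1
  have hup := nonneg_of_deriv_add_mul_nonneg (f := fun t => 1 - f t) hpq
    (fun t ht => (hf t ht).const_sub 1) (fun t ht => by linarith [hq₀ t ht]) (by linarith [h₀.2])
  exact fun t ht => ⟨hlow t ht, by linarith [hup t ht]⟩

theorem eventually_lt_of_deriv_le_neg_mul_sub {f f' : ℝ → ℝ} {k δ δ' : ℝ} (hk : 0 < k)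
    (hδ : δ < δ') (hf : ∀ᶠ t in atTop, HasDerivAt f (f' t) t)
    (h : ∀ᶠ t in atTop, f' t ≤ -k * (f t - δ)) : ∀ᶠ t in atTop, f t < δ' := by
  obtain ⟨T, hT⟩ := eventually_atTop.1 (hf.and h)
  have hmono := monotoneOn_mul_exp_of_deriv_add_mul_nonneg (convex_Ici T) (A := fun t => k * t)
    (f := fun t => δ - f t) (fun t ht => ((hT t ht).1).const_sub δ)
    (fun t _ => by simpa using (hasDerivAt_id t).const_mul k)
    (fun t ht => by linarith [(hT t ht).2])
  set C := (f T - δ) * exp (k * T)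
  have hbound : ∀ t ∈ Ici T, f t ≤ δ + C * exp (-(k * t)) := fun t ht => by
    have := hmono self_mem_Ici ht ht
    suffices f t - δ ≤ C / exp (k * t) by rw [exp_neg, ← div_eq_mul_inv]; linarith
    rw [le_div_iff₀ (exp_pos _)]
    linarith
  have hlim : Tendsto (fun t => δ + C * exp (-(k * t))) atTop (nhds δ) := by
    simpa using
      ((tendsto_exp_neg_atTop_nhds_zero.comp (tendsto_id.const_mul_atTop hk)).const_mul C).const_add δ
  filter_upwards [hlim.eventually_lt_const hδ, eventually_ge_atTop T] with t hlt ht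
  exact (hbound t ht).trans_lt hlt

theorem stmt_18 (N Vy Vn : ℝ → ℝ) (ky kn : ℝ) (hky : 0 < ky) (hkn : 0 < kn)
    (hVyc : Continuous Vy) (hVnc : Continuous Vn)
    (hVynn : ∀ t : ℝ, 0 ≤ t → 0 ≤ Vy t)
    (hVnnn : ∀ t : ℝ, 0 ≤ t → 0 ≤ Vn t)
    (hVn : Filter.Tendsto Vn Filter.atTop (nhds 0))
    (hVy : 0 < Filter.liminf Vy Filter.atTop)
    (hN0 : N 0 ∈ Set.Icc (0:ℝ) 1)
    (hN : ∀ t : ℝ, 0 ≤ t →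
      HasDerivAt N (kn * Vn t * (1 - N t) - ky * Vy t * N t) t) :
    Filter.Tendsto N Filter.atTop (nhds 0) := by
  have hmem : ∀ t ∈ Ici 0, N t ∈ Icc 0 1 :=
    mem_Icc_of_hasDerivAt_mul_one_sub_sub_mul (continuous_const.mul hVnc)
      (continuous_const.mul hVyc) (fun t ht => mul_nonneg hkn.le (hVnnn t ht))
      (fun t ht => mul_nonneg hky.le (hVynn t ht)) hN hN0
  obtain ⟨c, hc, hVy_gt⟩ : ∃ c, 0 < c ∧ ∀ᶠ t in atTop, c < Vy t :=
    ⟨_, half_pos hVy, eventually_lt_of_lt_liminf (half_lt_self hVy)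
      (isBoundedUnder_of_eventually_ge (eventually_atTop.2 ⟨0, hVynn⟩))⟩
  refine tendsto_order.2 ⟨fun ε hε => ?_, fun ε hε => ?_⟩
  · filter_upwards [eventually_ge_atTop 0] with t ht using hε.trans_le (hmem t ht).1
  have hVnsmall : ∀ᶠ t in atTop, kn * Vn t < ky * c * (ε / 2) := by
    have := hVn.const_mul kn
    rw [mul_zero] at this
    exact this.eventually_lt_const (by positivity)
  refine eventually_lt_of_deriv_le_neg_mul_sub (mul_pos hky hc) (half_lt_self hε)
    (eventually_atTop.2 ⟨0, hN⟩) ?_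
  filter_upwards [eventually_ge_atTop 0, hVy_gt, hVnsmall] with t ht hVyt hVnt
  obtain ⟨hN₀, hN₁⟩ := hmem t ht
  nlinarith [mul_nonneg (mul_nonneg hkn.le (hVnnn t ht)) hN₀,
    mul_le_mul_of_nonneg_left hVyt.le (mul_nonneg hky.le hN₀)]
end
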